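/- Retracting an edge yields the shortest paths of the reduced graph: in the shortest-path program with justifications, after running to exhaustion on a finite edge set E, logically retracting an edge e (killing all constraints whose justification set contains f_e and reviving all remembered constraints whose remembering annotation contains f_e) and re-running to exhaustion produces exactly the constraints p(X,Y,d) where d is the length of the shortest directed path from X to Y in E \ {e}. -/

import Mathlib

variable {V J : Type*} [DecidableEq V] [DecidableEq J]

/-- Constraints of the shortest-path program with justifications. -/
inductive SPC (V J : Type*) where
  | edge (x y : V) (F : Finset J)
  | path (x y : V) (l : ℕ) (F : Finset J)
  | rem (x y : V) (l : ℕ) (Fc F : Finset J)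

/-- A path constraint `p(x,y,l')` with `l' ≤ l` is already present (active or
remembered); firing a propagation producing `p(x,y,l)` is then redundant.
This models the propagation history that makes the program run terminate. -/
def spBlocked (S : Multiset (SPC V J)) (x y : V) (l : ℕ) : Prop :=
  (∃ l' ≤ l, ∃ F, SPC.path x y l' F ∈ S) ∨
  (∃ l' ≤ l, ∃ Fc F, SPC.rem x y l' Fc F ∈ S)

/-- One transition of the translated shortest-path program
(`e(X,Y) ⇒ p(X,Y,1)`, `e(X,Y) ∧ p(Y,Z,L) ⇒ p(X,Z,L+1)`,
`p(X,Y,L1) \ p(X,Y,L2) ⇔ L1 ≤ L2 | true`), with propagation history: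
bodies are annotated with the union of the head justification sets and
removed constraints are remembered via `rem`. -/
def SPStep (S T : Multiset (SPC V J)) : Prop :=
  (∃ (x y : V) (F : Finset J),
      SPC.edge x y F ∈ S ∧ ¬ spBlocked S x y 1 ∧
      T = SPC.path x y 1 F ::ₘ S) ∨
  (∃ (x y z : V) (l : ℕ) (F₁ F₂ : Finset J),
      SPC.edge x y F₁ ∈ S ∧ SPC.path y z l F₂ ∈ S ∧
      ¬ spBlocked S x z (l + 1) ∧
      T = SPC.path x z (l + 1) (F₁ ∪ F₂) ::ₘ S) ∨
  (∃ (x y : V) (l₁ l₂ : ℕ) (F₁ F₂ : Finset J) (G : Multiset (SPC V J)),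
      l₁ ≤ l₂ ∧ S = SPC.path x y l₁ F₁ ::ₘ SPC.path x y l₂ F₂ ::ₘ G ∧
      T = SPC.path x y l₁ F₁ ::ₘ SPC.rem x y l₂ F₂ (F₁ ∪ F₂) ::ₘ G)

/-- The initial state: each edge of `E` annotated with its own distinct
justification. -/
def spInit (E : Finset (V × V)) (fE : V × V → J) : Multiset (SPC V J) :=
  E.val.map fun p => SPC.edge p.1 p.2 {fE p}

/-- Logical retraction of justification `f`: kill every constraint whose
justification set contains `f` and revive every remembered constraint whose
remembering annotation contains `f` (unless its own justification set
contains `f`). -/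
def spRetract (f : J) (S : Multiset (SPC V J)) : Multiset (SPC V J) :=
  S.bind fun a => match a with
    | SPC.edge x y F => if f ∈ F then 0 else {SPC.edge x y F}
    | SPC.path x y l F => if f ∈ F then 0 else {SPC.path x y l F}
    | SPC.rem x y l Fc F =>
        if f ∈ F then (if f ∈ Fc then 0 else {SPC.path x y l Fc})
        else {SPC.rem x y l Fc F}

/-- There is a directed path of (positive) length `L` from `x` to `y` using
edges of `E'`. -/
def IsPathIn (E' : Finset (V × V)) (x y : V) (L : ℕ) : Prop :=
  ∃ vs : List V, vs.Chain' (fun a b => (a, b) ∈ E') ∧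
    vs.head? = some x ∧ vs.getLast? = some y ∧ vs.length = L + 1 ∧ 1 ≤ L

/-- No rule is applicable. -/
def spStuck (S : Multiset (SPC V J)) : Prop := ∀ T, ¬ SPStep S T

/-!
Two invariants survive every rule application. First, justification sets are sound: an active
`p(x,y,l)` annotated `F`, or a remembered one whose own set `F` lies in its remembering
annotation, is witnessed by an `x`–`y` path of length `l` all of whose edges have justifications
in `F`. Hence retracting `f_e`
leaves only constraints of `E \ {e}`, while all other edges survive since justifications are
distinct. Second, every remembered `p(x,y,l)` is dominated by an active `p(x,y,l')` with
`l' ≤ l`, so being blocked by a remembered constraint is as good as being blocked by an active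
one. This survives retracting any justification `f`: a remembered constraint is annotated with
the justifications of both constraints that met in the simpagation rule, so if `f` kills the
surviving one but not the removed one, the removed one is revived.

In an exhausted store every edge and every propagation is blocked, so by induction on path length
each path of length `L` from `x` to `y` yields an active `p(x,y,l)` with `l ≤ L`; simpagation
leaves only one length per pair, which therefore is the shortest distance.
-/

@[elab_as_elim]
theorem Relation.ReflTransGen.invariant {α : Type*} {r : α → α → Prop} {P : α → Prop}
    {a b : α} (h : Relation.ReflTransGen r a b) (hr : ∀ ⦃c d⦄, r c d → P c → P d)
    (ha : P a) : P b := by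
  induction h with
  | refl => exact ha
  | tail _ hcd ih => exact hr hcd ih

section
omit [DecidableEq V] [DecidableEq J]

theorem IsPathIn.mono {E₁ E₂ : Finset (V × V)} (hE : E₁ ⊆ E₂) {x y : V} {L : ℕ}
    (h : IsPathIn E₁ x y L) : IsPathIn E₂ x y L := by
  obtain ⟨vs, hc, hx, hy, hlen, hL⟩ := h
  exact ⟨vs, hc.imp fun _ _ hab => hE hab, hx, hy, hlen, hL⟩

theorem isPathIn_succ_iff {E : Finset (V × V)} {x y : V} {L : ℕ} :
    IsPathIn E x y (L + 1) ↔ (L = 0 ∧ (x, y) ∈ E) ∨ ∃ b, (x, b) ∈ E ∧ IsPathIn E b y L := by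
  constructor
  · rintro ⟨_ | ⟨a, _ | ⟨b, vs⟩⟩, hc, hx, hy, hlen, -⟩
    · simp at hx
    · simp at hlen
    obtain rfl : a = x := by simpa using hx
    replace hc := List.isChain_cons_cons.mp hc
    rw [List.getLast?_cons_cons] at hy
    rcases Nat.eq_zero_or_pos L with rfl | hL
    · obtain rfl : vs = [] := by simpa using hlen
      obtain rfl : b = y := by simpa using hy
      exact Or.inl ⟨rfl, hc.1⟩
    · exact Or.inr ⟨b, hc.1, b :: vs, hc.2, rfl, hy, by simpa using hlen, hL⟩
  · rintro (⟨rfl, hxy⟩ | ⟨b, hxb, _ | ⟨c, vs⟩, hc, hb, hy, hlen, -⟩)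
    · exact ⟨[x, y], List.isChain_pair.mpr hxy, rfl, rfl, rfl, le_rfl⟩
    · simp at hb
    obtain rfl : c = b := by simpa using hb
    exact ⟨x :: c :: vs, List.isChain_cons_cons.mpr ⟨hxb, hc⟩, rfl,
      by rwa [List.getLast?_cons_cons], by simpa using hlen, by omega⟩

def HasPathLE (S : Multiset (SPC V J)) (x y : V) (l : ℕ) : Prop :=
  ∃ l' ≤ l, ∃ F, SPC.path x y l' F ∈ S

def RemsDominated (S : Multiset (SPC V J)) : Prop :=
  ∀ x y l Fc F, SPC.rem x y l Fc F ∈ S → HasPathLE S x y l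

theorem RemsDominated.hasPathLE_of_spBlocked {S : Multiset (SPC V J)} (hw : RemsDominated S)
    {x y : V} {l : ℕ} (h : spBlocked S x y l) : HasPathLE S x y l := by
  rcases h with hp | ⟨l', hl', Fc, F, hr⟩
  · exact hp
  · obtain ⟨l'', hl'', F', hp⟩ := hw _ _ _ _ _ hr
    exact ⟨l'', hl''.trans hl', F', hp⟩

end

section
omit [DecidableEq V]

namespace spStuck

variable {S : Multiset (SPC V J)} (hS : spStuck S)
include hS

theorem spBlocked_of_edge {x y : V} {F : Finset J} (he : SPC.edge x y F ∈ S) :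
    spBlocked S x y 1 :=
  not_not.mp fun hb => hS _ (Or.inl ⟨x, y, F, he, hb, rfl⟩)

theorem spBlocked_of_edge_path {x y z : V} {l : ℕ} {F₁ F₂ : Finset J}
    (he : SPC.edge x y F₁ ∈ S) (hp : SPC.path y z l F₂ ∈ S) : spBlocked S x z (l + 1) :=
  not_not.mp fun hb => hS _ (Or.inr (Or.inl ⟨x, y, z, l, F₁, F₂, he, hp, hb, rfl⟩))

theorem path_length_eq {x y : V} {l₁ l₂ : ℕ} {F₁ F₂ : Finset J}
    (h₁ : SPC.path x y l₁ F₁ ∈ S) (h₂ : SPC.path x y l₂ F₂ ∈ S) : l₁ = l₂ := by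
  wlog hle : l₁ ≤ l₂ generalizing l₁ l₂ F₁ F₂
  · exact (this h₂ h₁ (le_of_not_ge hle)).symm
  by_contra hne
  obtain ⟨G₁, rfl⟩ := Multiset.exists_cons_of_mem h₁
  obtain ⟨G, rfl⟩ : ∃ G, G₁ = SPC.path x y l₂ F₂ ::ₘ G := by
    rcases Multiset.mem_cons.mp h₂ with h | h
    · simp only [SPC.path.injEq] at h
      omega
    · exact Multiset.exists_cons_of_mem h
  exact hS _ (Or.inr (Or.inr ⟨x, y, l₁, l₂, F₁, F₂, G, hle, rfl, rfl⟩))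

theorem hasPathLE_of_isPathIn {E : Finset (V × V)} (hE : ∀ p ∈ E, ∃ F, SPC.edge p.1 p.2 F ∈ S)
    (hw : RemsDominated S) {x y : V} {L : ℕ} (h : IsPathIn E x y L) : HasPathLE S x y L := by
  induction L generalizing x with
  | zero =>
    obtain ⟨_, _, _, _, _, h0⟩ := h
    omega
  | succ L ih =>
    rcases isPathIn_succ_iff.mp h with ⟨rfl, hxy⟩ | ⟨b, hxb, hb⟩
    · obtain ⟨F, he⟩ := hE _ hxy
      exact hw.hasPathLE_of_spBlocked (spBlocked_of_edge hS he)
    · obtain ⟨F, he⟩ := hE _ hxb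
      obtain ⟨l, hl, F', hp⟩ := ih hb
      obtain ⟨l', hl', F'', hp'⟩ := hw.hasPathLE_of_spBlocked (spBlocked_of_edge_path hS he hp)
      exact ⟨l', by omega, F'', hp'⟩

end spStuck

namespace SPStep

variable {S T : Multiset (SPC V J)} (h : SPStep S T)
include h

theorem edge_mem {x y : V} {F : Finset J} (he : SPC.edge x y F ∈ S) : SPC.edge x y F ∈ T := by
  rcases h with ⟨_, _, _, _, _, rfl⟩ | ⟨_, _, _, _, _, _, _, _, _, rfl⟩ |
    ⟨_, _, _, _, _, _, G, _, rfl, rfl⟩ <;> simp_all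

theorem rem_mem {x y : V} {l : ℕ} {Fc F : Finset J} (hr : SPC.rem x y l Fc F ∈ S) :
    SPC.rem x y l Fc F ∈ T := by
  rcases h with ⟨_, _, _, _, _, rfl⟩ | ⟨_, _, _, _, _, _, _, _, _, rfl⟩ |
    ⟨_, _, _, _, _, _, G, _, rfl, rfl⟩ <;> simp_all

theorem rem_mem_or {x y : V} {l : ℕ} {Fc F : Finset J} (hr : SPC.rem x y l Fc F ∈ T) :
    SPC.rem x y l Fc F ∈ S ∨ ∃ l' ≤ l, ∃ F' ⊆ F, SPC.path x y l' F' ∈ T := by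
  rcases h with ⟨_, _, _, _, _, rfl⟩ | ⟨_, _, _, _, _, _, _, _, _, rfl⟩ |
    ⟨x', y', l₁, l₂, F₁, F₂, G, hle, rfl, rfl⟩
  · simp_all
  · simp_all
  · simp only [Multiset.mem_cons, reduceCtorEq, false_or, SPC.rem.injEq] at hr ⊢
    rcases hr with ⟨rfl, rfl, rfl, rfl, rfl⟩ | hr
    · exact Or.inr ⟨l₁, hle, F₁, Finset.subset_union_left, Or.inl rfl⟩
    · exact Or.inl hr

theorem hasPathLE {x y : V} {l : ℕ} (hp : HasPathLE S x y l) : HasPathLE T x y l := by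
  obtain ⟨l', hl', F, hp⟩ := hp
  rcases h with ⟨_, _, _, _, _, rfl⟩ | ⟨_, _, _, _, _, _, _, _, _, rfl⟩ |
    ⟨x', y', l₁, l₂, F₁, F₂, G, hle, rfl, rfl⟩
  · exact ⟨l', hl', F, Multiset.mem_cons_of_mem hp⟩
  · exact ⟨l', hl', F, Multiset.mem_cons_of_mem hp⟩
  · simp only [Multiset.mem_cons, SPC.path.injEq] at hp
    rcases hp with ⟨rfl, rfl, rfl, rfl⟩ | ⟨rfl, rfl, rfl, rfl⟩ | hp
    · exact ⟨_, hl', _, Multiset.mem_cons_self _ _⟩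
    · exact ⟨_, hle.trans hl', _, Multiset.mem_cons_self _ _⟩
    · exact ⟨l', hl', F, by simp [hp]⟩

end SPStep

section

variable {f : J} {S : Multiset (SPC V J)} {x y : V}

@[simp]
theorem edge_mem_spRetract {F : Finset J} :
    SPC.edge x y F ∈ spRetract f S ↔ SPC.edge x y F ∈ S ∧ f ∉ F := by
  simp only [spRetract, Multiset.mem_bind]
  constructor
  · rintro ⟨_ | _ | _, ha, hc⟩ <;> dsimp only at hc <;> split_ifs at hc <;> simp_all
  · exact fun ⟨he, hf⟩ => ⟨_, he, by simp [hf]⟩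

@[simp]
theorem path_mem_spRetract {l : ℕ} {F : Finset J} :
    SPC.path x y l F ∈ spRetract f S ↔
      f ∉ F ∧ (SPC.path x y l F ∈ S ∨ ∃ F', SPC.rem x y l F F' ∈ S ∧ f ∈ F') := by
  simp only [spRetract, Multiset.mem_bind]
  constructor
  · rintro ⟨_ | _ | _, ha, hc⟩ <;> dsimp only at hc <;> split_ifs at hc <;> aesop
  · rintro ⟨hf, hp | ⟨F', hr, hf'⟩⟩
    · exact ⟨_, hp, by simp [hf]⟩
    · exact ⟨_, hr, by simp [hf, hf']⟩

@[simp]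
theorem rem_mem_spRetract {l : ℕ} {Fc F : Finset J} :
    SPC.rem x y l Fc F ∈ spRetract f S ↔ SPC.rem x y l Fc F ∈ S ∧ f ∉ F := by
  simp only [spRetract, Multiset.mem_bind]
  constructor
  · rintro ⟨_ | _ | _, ha, hc⟩ <;> dsimp only at hc <;> split_ifs at hc <;> simp_all
  · exact fun ⟨hr, hf⟩ => ⟨_, hr, by simp [hf]⟩

end

variable {S T : Multiset (SPC V J)}

theorem RemsDominated.step (hw : RemsDominated S) (h : SPStep S T) :
    RemsDominated T := fun _ _ _ _ _ hr =>
  (h.rem_mem_or hr).elim (fun hr => h.hasPathLE (hw _ _ _ _ _ hr))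
    fun ⟨l', hl', F', _, hp⟩ => ⟨l', hl', F', hp⟩

theorem SPStep.hasPathLE_spRetract_of_path_mem (h : SPStep S T) {f : J} {x y : V} {l : ℕ}
    {F : Finset J} (hp : SPC.path x y l F ∈ S) (hf : f ∉ F) :
    HasPathLE (spRetract f T) x y l := by
  rcases h with ⟨_, _, _, _, _, rfl⟩ | ⟨_, _, _, _, _, _, _, _, _, rfl⟩ |
    ⟨x', y', l₁, l₂, F₁, F₂, G, hle, rfl, rfl⟩
  · exact ⟨l, le_rfl, F, by simp [hf, hp]⟩
  · exact ⟨l, le_rfl, F, by simp [hf, hp]⟩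
  simp only [Multiset.mem_cons, SPC.path.injEq] at hp
  rcases hp with ⟨rfl, rfl, rfl, rfl⟩ | ⟨rfl, rfl, rfl, rfl⟩ | hp
  · exact ⟨l, le_rfl, F, by simp [hf]⟩
  · by_cases hf₁ : f ∈ F₁
    · exact ⟨l, le_rfl, F, path_mem_spRetract.mpr ⟨hf, Or.inr ⟨F₁ ∪ F, by simp, by simp [hf₁]⟩⟩⟩
    · exact ⟨l₁, hle, F₁, by simp [hf₁]⟩
  · exact ⟨l, le_rfl, F, by simp [hf, hp]⟩

theorem SPStep.hasPathLE_spRetract (h : SPStep S T) {f : J} {x y : V} {l : ℕ}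
    (hp : HasPathLE (spRetract f S) x y l) : HasPathLE (spRetract f T) x y l := by
  obtain ⟨l', hl', F, hp⟩ := hp
  obtain ⟨hf, hp | ⟨F', hr, hf'⟩⟩ := path_mem_spRetract.mp hp
  · obtain ⟨l'', hl'', F'', hp'⟩ := h.hasPathLE_spRetract_of_path_mem hp hf
    exact ⟨l'', hl''.trans hl', F'', hp'⟩
  · exact ⟨l', hl', F, path_mem_spRetract.mpr ⟨hf, Or.inr ⟨F', h.rem_mem hr, hf'⟩⟩⟩

theorem RemsDominated.spRetract_step (hw : ∀ f, RemsDominated (spRetract f S))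
    (h : SPStep S T) (f : J) : RemsDominated (spRetract f T) := by
  intro x y l Fc F hr
  obtain ⟨hr, hf⟩ := rem_mem_spRetract.mp hr
  rcases h.rem_mem_or hr with hr | ⟨l', hl', F', hF', hp⟩
  · exact h.hasPathLE_spRetract (hw f _ _ _ _ _ (rem_mem_spRetract.mpr ⟨hr, hf⟩))
  · exact ⟨l', hl', F', path_mem_spRetract.mpr ⟨fun h => hf (hF' h), Or.inl hp⟩⟩

theorem remsDominated_spRetract_spInit (E : Finset (V × V)) (fE : V × V → J) (f : J) :
    RemsDominated (spRetract f (spInit E fE)) := by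
  intro x y l Fc F hr
  obtain ⟨p, -, hp⟩ := Multiset.mem_map.mp (rem_mem_spRetract.mp hr).1
  cases hp

def SPC.Justified (E : Finset (V × V)) (fE : V × V → J) : SPC V J → Prop
  | .edge x y F => (x, y) ∈ E ∧ fE (x, y) ∈ F
  | .path x y l F => IsPathIn (E.filter (fE · ∈ F)) x y l
  | .rem x y l Fc F => IsPathIn (E.filter (fE · ∈ Fc)) x y l ∧ Fc ⊆ F

structure IsJustifiedState (E : Finset (V × V)) (fE : V × V → J) (S : Multiset (SPC V J)) :
    Prop where
  justified : ∀ c ∈ S, c.Justified E fE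
  edge_mem : ∀ p ∈ E, SPC.edge p.1 p.2 {fE p} ∈ S

theorem IsJustifiedState.init (E : Finset (V × V)) (fE : V × V → J) :
    IsJustifiedState E fE (spInit E fE) where
  justified c hc := by
    obtain ⟨p, hp, rfl⟩ := Multiset.mem_map.mp hc
    exact ⟨hp, Finset.mem_singleton_self _⟩
  edge_mem _ hp := Multiset.mem_map_of_mem _ hp

theorem IsJustifiedState.step {E : Finset (V × V)} {fE : V × V → J}
    (hJ : IsJustifiedState E fE S) (h : SPStep S T) : IsJustifiedState E fE T := by
  refine ⟨?_, fun p hp => h.edge_mem (hJ.edge_mem p hp)⟩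
  have mono {F F' : Finset J} (hF : F ⊆ F') : E.filter (fE · ∈ F) ⊆ E.filter (fE · ∈ F') :=
    Finset.monotone_filter_right E fun _ _ h => hF h
  rcases h with ⟨x, y, F, he, -, rfl⟩ | ⟨x, y, z, l, F₁, F₂, he, hp, -, rfl⟩ |
    ⟨x, y, l₁, l₂, F₁, F₂, G, -, rfl, rfl⟩
  · intro c hc
    rcases Multiset.mem_cons.mp hc with rfl | hc
    · exact isPathIn_succ_iff.mpr (.inl ⟨rfl, Finset.mem_filter.mpr (hJ.justified _ he)⟩)
    · exact hJ.justified c hc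
  · intro c hc
    rcases Multiset.mem_cons.mp hc with rfl | hc
    · obtain ⟨hxy, hF₁⟩ := hJ.justified _ he
      exact isPathIn_succ_iff.mpr (.inr ⟨y, by simp [hxy, hF₁],
        (hJ.justified _ hp).mono (mono Finset.subset_union_right)⟩)
    · exact hJ.justified c hc
  · intro c hc
    rcases Multiset.mem_cons.mp hc with rfl | hc
    · exact hJ.justified _ (by simp)
    rcases Multiset.mem_cons.mp hc with rfl | hc
    · exact ⟨hJ.justified (.path x y l₂ F₂) (by simp), Finset.subset_union_right⟩
    · exact hJ.justified c (by simp [hc])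

end

theorem filter_subset_filter_erase {E : Finset (V × V)} {fE : V × V → J} {F : Finset J}
    {ed : V × V} (hF : fE ed ∉ F) : E.filter (fE · ∈ F) ⊆ (E.erase ed).filter (fE · ∈ F) := by
  intro p hp
  simp only [Finset.mem_filter, Finset.mem_erase] at hp ⊢
  exact ⟨⟨by rintro rfl; exact hF hp.2, hp.1⟩, hp.2⟩

theorem IsJustifiedState.spRetract_erase {E : Finset (V × V)} {fE : V × V → J}
    (hinj : Function.Injective fE) {S : Multiset (SPC V J)} (hJ : IsJustifiedState E fE S)
    (ed : V × V) : IsJustifiedState (E.erase ed) fE (spRetract (fE ed) S) := by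
  constructor
  · rintro (⟨x, y, F⟩ | ⟨x, y, l, F⟩ | ⟨x, y, l, Fc, F⟩) hc
    · obtain ⟨he, hf⟩ := edge_mem_spRetract.mp hc
      obtain ⟨hxy, hF⟩ := hJ.justified _ he
      exact ⟨Finset.mem_erase.mpr ⟨fun h => hf (h ▸ hF), hxy⟩, hF⟩
    · obtain ⟨hf, hp | ⟨F', hr, -⟩⟩ := path_mem_spRetract.mp hc
      · exact (hJ.justified _ hp).mono (filter_subset_filter_erase hf)
      · exact (hJ.justified _ hr).1.mono (filter_subset_filter_erase hf)
    · obtain ⟨hr, hf⟩ := rem_mem_spRetract.mp hc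
      obtain ⟨hp, hsub⟩ := hJ.justified _ hr
      exact ⟨hp.mono (filter_subset_filter_erase fun h => hf (hsub h)), hsub⟩
  · intro p hp
    refine edge_mem_spRetract.mpr ⟨hJ.edge_mem p (Finset.mem_of_mem_erase hp), ?_⟩
    simpa [hinj.eq_iff] using (Finset.ne_of_mem_erase hp).symm

theorem sp_retract_edge_correct_general (E : Finset (V × V)) (fE : V × V → J)
    (hinj : Function.Injective fE) (ed : V × V)
    (S : Multiset (SPC V J))
    (hreach : Relation.ReflTransGen SPStep (spInit E fE) S)
    (T : Multiset (SPC V J))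
    (hreach' : Relation.ReflTransGen SPStep (spRetract (fE ed) S) T)
    (hstuck' : spStuck T) :
    ∀ (x y : V) (d : ℕ),
      (∃ F, SPC.path x y d F ∈ T) ↔
      (IsPathIn (E.erase ed) x y d ∧
        ∀ d', IsPathIn (E.erase ed) x y d' → d ≤ d') := by
  obtain ⟨hJS, hDS⟩ : IsJustifiedState E fE S ∧ ∀ f, RemsDominated (spRetract f S) :=
    hreach.invariant (fun _ _ h hP => ⟨hP.1.step h, RemsDominated.spRetract_step hP.2 h⟩)
      ⟨.init E fE, remsDominated_spRetract_spInit E fE⟩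
  obtain ⟨hJT, hDT⟩ : IsJustifiedState (E.erase ed) fE T ∧ RemsDominated T :=
    hreach'.invariant (fun _ _ h hP => ⟨hP.1.step h, hP.2.step h⟩)
      ⟨hJS.spRetract_erase hinj ed, hDS (fE ed)⟩
  have sound {x y : V} {d : ℕ} {F : Finset J} (h : SPC.path x y d F ∈ T) :
      IsPathIn (E.erase ed) x y d :=
    (hJT.justified _ h).mono (Finset.filter_subset _ _)
  have complete {x y : V} {d : ℕ} (h : IsPathIn (E.erase ed) x y d) : HasPathLE T x y d :=
    hstuck'.hasPathLE_of_isPathIn (fun p hp => ⟨_, hJT.edge_mem p hp⟩) hDT h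
  intro x y d
  constructor
  · rintro ⟨F, hF⟩
    refine ⟨sound hF, fun d' hd' => ?_⟩
    obtain ⟨l, hl, F', hF'⟩ := complete hd'
    exact hstuck'.path_length_eq hF hF' ▸ hl
  · rintro ⟨hd, hmin⟩
    obtain ⟨l, hl, F, hF⟩ := complete hd
    obtain rfl : l = d := le_antisymm hl (hmin l (sound hF))
    exact ⟨F, hF⟩

/-- Retracting an edge yields the shortest paths of the reduced graph: after
running the shortest-path program to exhaustion on the finite edge set `E`,
logically retracting the edge `ed` and re-running to exhaustion produces
exactly the constraints `p(x,y,d)` where `d` is the length of the shortest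
directed path from `x` to `y` in `E \ {ed}`. -/
theorem sp_retract_edge_correct (E : Finset (V × V)) (fE : V × V → J)
    (hinj : Function.Injective fE) (ed : V × V) (hed : ed ∈ E)
    (S : Multiset (SPC V J))
    (hreach : Relation.ReflTransGen SPStep (spInit E fE) S)
    (hstuck : spStuck S)
    (T : Multiset (SPC V J))
    (hreach' : Relation.ReflTransGen SPStep (spRetract (fE ed) S) T)
    (hstuck' : spStuck T) :
    ∀ (x y : V) (d : ℕ),
      (∃ F, SPC.path x y d F ∈ T) ↔
      (IsPathIn (E.erase ed) x y d ∧
        ∀ d', IsPathIn (E.erase ed) x y d' → d ≤ d') :=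
  sp_retract_edge_correct_general E fE hinj ed S hreach T hreach' hstuck'
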